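/- The function x ↦ x + ψ^{-1}(x) is strictly decreasing on (0,∞), where ψ(x) = φ(x)/Φ(x) is built from the standard Gaussian density φ and CDF Φ and ψ^{-1} is its inverse. -/

import Mathlib

open Real Set MeasureTheory Filter Topology

/-!
Differentiating `ψ = φ / Φ` gives `ψ' = -ψ (x + ψ)`, so `ψ` is strictly decreasing and
`y ↦ ψ y + y` strictly increasing as soon as `0 < ψ (x + ψ) < 1`, i.e.
`0 < φ m < Φ²` with `m = x Φ + φ`. Each of `m`, `k = (1 + x²) Φ + x φ` and `Φ² - φ m` tends to
`0` at `-∞` and has derivative `Φ`, `2 m` and `φ k` respectively, so positivity propagates along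
this chain starting from `Φ > 0`. The limits at `-∞` come from the tail bound `-x Φ ≤ φ`.
-/

/-- The standard Gaussian density. -/
noncomputable def stdGaussPDF (x : ℝ) : ℝ :=
  (Real.sqrt (2 * Real.pi))⁻¹ * Real.exp (-x ^ 2 / 2)

/-- The standard Gaussian cumulative distribution function. -/
noncomputable def stdGaussCDF (x : ℝ) : ℝ :=
  ∫ u in Set.Iic x, stdGaussPDF u

/-- The inverse Mill's ratio ψ(x) = φ(x)/Φ(x). -/
noncomputable def psiMill (x : ℝ) : ℝ := stdGaussPDF x / stdGaussCDF x

theorem StrictMono.lt_of_tendsto_atBot {α β : Type*} [LinearOrder α] [NoMinOrder α]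
    [TopologicalSpace β] [Preorder β] [OrderClosedTopology β] {f : α → β} {a : β}
    (hf : StrictMono f) (ha : Tendsto f atBot (𝓝 a)) (x : α) : a < f x := by
  obtain ⟨y, hy⟩ := exists_lt x
  exact (hf.monotone.le_of_tendsto ha y).trans_lt (hf hy)

lemma stdGaussPDF_eq (x : ℝ) :
    stdGaussPDF x = (√(2 * π))⁻¹ * rexp (-(1 / 2) * x ^ 2) := by
  rw [stdGaussPDF]; ring_nf

lemma stdGaussPDF_pos (x : ℝ) : 0 < stdGaussPDF x := by
  rw [stdGaussPDF]; positivity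

lemma continuous_stdGaussPDF : Continuous stdGaussPDF := by
  unfold stdGaussPDF; fun_prop

lemma hasDerivAt_stdGaussPDF (x : ℝ) : HasDerivAt stdGaussPDF (-x * stdGaussPDF x) x := by
  have h : HasDerivAt (fun y : ℝ => -y ^ 2 / 2) (-x) x :=
    ((hasDerivAt_pow 2 x).neg.div_const 2).congr_deriv (by ring)
  exact (h.exp.const_mul (√(2 * π))⁻¹).congr_deriv (by rw [stdGaussPDF]; ring)

lemma integrable_stdGaussPDF : Integrable stdGaussPDF := by
  simp_rw [funext stdGaussPDF_eq]
  exact (integrable_exp_neg_mul_sq (by norm_num)).const_mul _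

lemma integrable_mul_stdGaussPDF : Integrable fun x => x * stdGaussPDF x := by
  simp_rw [stdGaussPDF_eq, mul_left_comm _ (√(2 * π))⁻¹]
  exact (integrable_mul_exp_neg_mul_sq (by norm_num)).const_mul _

lemma integrable_neg_mul_stdGaussPDF : Integrable fun x => -x * stdGaussPDF x := by
  simpa only [neg_mul] using integrable_mul_stdGaussPDF.fun_neg

lemma tendsto_pow_mul_stdGaussPDF_atBot (n : ℕ) :
    Tendsto (fun x => x ^ n * stdGaussPDF x) atBot (𝓝 0) := by
  rw [tendsto_zero_iff_norm_tendsto_zero]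
  have h := ((tendsto_rpow_abs_mul_exp_neg_mul_sq_cocompact (by norm_num : (0 : ℝ) < 1 / 2)
    n).mono_left atBot_le_cocompact).const_mul (√(2 * π))⁻¹
  rw [mul_zero] at h
  refine h.congr fun x => ?_
  rw [norm_mul, norm_pow, Real.norm_eq_abs, Real.norm_of_nonneg (stdGaussPDF_pos x).le,
    stdGaussPDF_eq, Real.rpow_natCast]
  ring

lemma hasDerivAt_stdGaussCDF (x : ℝ) : HasDerivAt stdGaussCDF (stdGaussPDF x) x := by
  have hΦ : stdGaussCDF = fun y => stdGaussCDF 0 + ∫ t in (0 : ℝ)..y, stdGaussPDF t := by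
    funext y
    rw [stdGaussCDF, stdGaussCDF, ← intervalIntegral.integral_Iic_sub_Iic
      integrable_stdGaussPDF.integrableOn integrable_stdGaussPDF.integrableOn]
    ring
  rw [hΦ]
  exact (intervalIntegral.integral_hasDerivAt_right integrable_stdGaussPDF.intervalIntegrable
    (continuous_stdGaussPDF.stronglyMeasurableAtFilter _ _)
    continuous_stdGaussPDF.continuousAt).const_add _

lemma stdGaussCDF_strictMono : StrictMono stdGaussCDF :=
  strictMono_of_hasDerivAt_pos hasDerivAt_stdGaussCDF stdGaussPDF_pos

lemma stdGaussCDF_pos (x : ℝ) : 0 < stdGaussCDF x :=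
  (setIntegral_nonneg measurableSet_Iic fun u _ => (stdGaussPDF_pos u).le).trans_lt
    (stdGaussCDF_strictMono (sub_one_lt x))

lemma setIntegral_Iic_neg_mul_stdGaussPDF (x : ℝ) :
    ∫ u in Iic x, -u * stdGaussPDF u = stdGaussPDF x := by
  rw [integral_Iic_of_hasDerivAt_of_tendsto' (fun u _ => hasDerivAt_stdGaussPDF u)
    integrable_neg_mul_stdGaussPDF.integrableOn
    (by simpa using tendsto_pow_mul_stdGaussPDF_atBot 0), sub_zero]

lemma neg_mul_stdGaussCDF_le_stdGaussPDF (x : ℝ) : -x * stdGaussCDF x ≤ stdGaussPDF x := by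
  rw [stdGaussCDF, ← integral_const_mul, ← setIntegral_Iic_neg_mul_stdGaussPDF]
  exact setIntegral_mono_on (integrable_stdGaussPDF.const_mul _).integrableOn
    integrable_neg_mul_stdGaussPDF.integrableOn measurableSet_Iic
    fun u hu => mul_le_mul_of_nonneg_right (neg_le_neg hu) (stdGaussPDF_pos u).le

lemma tendsto_pow_mul_stdGaussCDF_atBot (n : ℕ) :
    Tendsto (fun x => x ^ n * stdGaussCDF x) atBot (𝓝 0) := by
  refine squeeze_zero_norm' ?_
    (tendsto_zero_iff_norm_tendsto_zero.mp (tendsto_pow_mul_stdGaussPDF_atBot n))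
  filter_upwards [eventually_le_atBot (-1 : ℝ)] with x hx
  rw [norm_mul, norm_mul, Real.norm_of_nonneg (stdGaussCDF_pos x).le,
    Real.norm_of_nonneg (stdGaussPDF_pos x).le]
  refine mul_le_mul_of_nonneg_left ?_ (norm_nonneg _)
  nlinarith [neg_mul_stdGaussCDF_le_stdGaussPDF x, stdGaussCDF_pos x]

lemma mul_stdGaussCDF_add_stdGaussPDF_pos (x : ℝ) : 0 < x * stdGaussCDF x + stdGaussPDF x := by
  have hderiv (x : ℝ) :
      HasDerivAt (fun x => x * stdGaussCDF x + stdGaussPDF x) (stdGaussCDF x) x := by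
    refine (((hasDerivAt_id x).mul (hasDerivAt_stdGaussCDF x)).add
      (hasDerivAt_stdGaussPDF x)).congr_deriv ?_
    simp only [id]; ring
  refine (strictMono_of_hasDerivAt_pos hderiv stdGaussCDF_pos).lt_of_tendsto_atBot ?_ x
  simpa using (tendsto_pow_mul_stdGaussCDF_atBot 1).add (tendsto_pow_mul_stdGaussPDF_atBot 0)

lemma one_add_sq_mul_stdGaussCDF_add_mul_stdGaussPDF_pos (x : ℝ) :
    0 < (1 + x ^ 2) * stdGaussCDF x + x * stdGaussPDF x := by
  have hderiv (x : ℝ) : HasDerivAt (fun x => (1 + x ^ 2) * stdGaussCDF x + x * stdGaussPDF x)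
      (2 * (x * stdGaussCDF x + stdGaussPDF x)) x := by
    refine ((((hasDerivAt_pow 2 x).const_add 1).mul (hasDerivAt_stdGaussCDF x)).add
      ((hasDerivAt_id x).mul (hasDerivAt_stdGaussPDF x))).congr_deriv ?_
    simp only [id]; ring
  refine (strictMono_of_hasDerivAt_pos hderiv fun x => by
    linarith [mul_stdGaussCDF_add_stdGaussPDF_pos x]).lt_of_tendsto_atBot ?_ x
  simpa [add_mul, add_assoc] using ((tendsto_pow_mul_stdGaussCDF_atBot 0).add
    (tendsto_pow_mul_stdGaussCDF_atBot 2)).add (tendsto_pow_mul_stdGaussPDF_atBot 1)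

lemma stdGaussPDF_mul_lt_sq_stdGaussCDF (x : ℝ) :
    stdGaussPDF x * (x * stdGaussCDF x + stdGaussPDF x) < stdGaussCDF x ^ 2 := by
  rw [← sub_pos]
  have hderiv (x : ℝ) :
      HasDerivAt (fun x => stdGaussCDF x ^ 2 - stdGaussPDF x * (x * stdGaussCDF x + stdGaussPDF x))
        (stdGaussPDF x * ((1 + x ^ 2) * stdGaussCDF x + x * stdGaussPDF x)) x := by
    refine (((hasDerivAt_stdGaussCDF x).pow 2).sub ((hasDerivAt_stdGaussPDF x).mul
      (((hasDerivAt_id x).mul (hasDerivAt_stdGaussCDF x)).add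
        (hasDerivAt_stdGaussPDF x)))).congr_deriv ?_
    simp only [Pi.add_apply, Pi.mul_apply, id]; ring
  refine (strictMono_of_hasDerivAt_pos hderiv fun x => mul_pos (stdGaussPDF_pos x)
    (one_add_sq_mul_stdGaussCDF_add_mul_stdGaussPDF_pos x)).lt_of_tendsto_atBot ?_ x
  have hΦ := tendsto_pow_mul_stdGaussCDF_atBot 0
  have hφ := tendsto_pow_mul_stdGaussPDF_atBot 0
  simp only [pow_zero, one_mul] at hΦ hφ
  simpa [mul_add, ← mul_assoc] using (hΦ.pow 2).sub
    (((hφ.mul (tendsto_pow_mul_stdGaussCDF_atBot 1))).add (hφ.mul hφ))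

lemma hasDerivAt_psiMill (x : ℝ) :
    HasDerivAt psiMill (-(psiMill x * (x + psiMill x))) x := by
  have hΦ := (stdGaussCDF_pos x).ne'
  refine ((hasDerivAt_stdGaussPDF x).div (hasDerivAt_stdGaussCDF x) hΦ).congr_deriv ?_
  simp only [psiMill]; field_simp; ring

lemma psiMill_mul_add_eq (x : ℝ) :
    psiMill x * (x + psiMill x) =
      stdGaussPDF x * (x * stdGaussCDF x + stdGaussPDF x) / stdGaussCDF x ^ 2 := by
  have hΦ := (stdGaussCDF_pos x).ne'
  simp only [psiMill]; field_simp

lemma psiMill_mul_add_pos (x : ℝ) : 0 < psiMill x * (x + psiMill x) := by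
  rw [psiMill_mul_add_eq]
  exact div_pos (mul_pos (stdGaussPDF_pos x) (mul_stdGaussCDF_add_stdGaussPDF_pos x))
    (pow_pos (stdGaussCDF_pos x) 2)

lemma psiMill_mul_add_lt_one (x : ℝ) : psiMill x * (x + psiMill x) < 1 := by
  rw [psiMill_mul_add_eq, div_lt_one (pow_pos (stdGaussCDF_pos x) 2)]
  exact stdGaussPDF_mul_lt_sq_stdGaussCDF x

lemma psiMill_strictAnti : StrictAnti psiMill :=
  strictAnti_of_hasDerivAt_neg hasDerivAt_psiMill fun x => neg_neg_of_pos (psiMill_mul_add_pos x)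

lemma strictMono_psiMill_add_id : StrictMono fun y => psiMill y + y :=
  strictMono_of_hasDerivAt_pos (fun x => (hasDerivAt_psiMill x).add (hasDerivAt_id x))
    fun x => by linarith [psiMill_mul_add_lt_one x]

theorem psiMill_inv_add_id_strictAnti_general (g : ℝ → ℝ)
    (hg : ∀ x : ℝ, 0 < x → psiMill (g x) = x) :
    StrictAntiOn (fun x => x + g x) (Set.Ioi (0 : ℝ)) := by
  intro a ha b hb hab
  have hgba : g b < g a := psiMill_strictAnti.lt_iff_gt.mp (by rwa [hg a ha, hg b hb])
  simpa only [hg a ha, hg b hb] using strictMono_psiMill_add_id hgba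

theorem psiMill_inv_add_id_strictAnti (g : ℝ → ℝ)
    (hg : ∀ x : ℝ, 0 < x → psiMill (g x) = x)
    (hg' : ∀ y : ℝ, g (psiMill y) = y) :
    StrictAntiOn (fun x => x + g x) (Set.Ioi (0 : ℝ)) :=
  psiMill_inv_add_id_strictAnti_general g hg
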